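/- Product case with primes: let M₁ be an R₁-module and M₂ an R₂-module over R = R₁ × R₂. If P₁ is a prime submodule of M₁ and P₂ is a prime submodule of M₂, then P₁ × P₂ is a 2-absorbing submodule of M₁ × M₂. -/
import Mathlib


/-- A proper submodule `P` of `M` is prime if whenever `r • m ∈ P`, then `m ∈ P` or
`r ∈ (P :_R M)`. -/
def IsPrimeSubmodule {R M : Type*} [CommRing R] [AddCommGroup M] [Module R M]
    (P : Submodule R M) : Prop :=
  P ≠ ⊤ ∧ ∀ r : R, ∀ m : M, r • m ∈ P → m ∈ P ∨ r ∈ P.colon ⊤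

/-- A proper submodule `F` of `M` is 2-absorbing if whenever `a • b • m ∈ F`, then
`a * b ∈ (F :_R M)`, or `a • m ∈ F`, or `b • m ∈ F`. -/
def IsTwoAbsorbing {R M : Type*} [CommRing R] [AddCommGroup M] [Module R M]
    (F : Submodule R M) : Prop :=
  F ≠ ⊤ ∧ ∀ a b : R, ∀ m : M, a • b • m ∈ F →
    a * b ∈ F.colon ⊤ ∨ a • m ∈ F ∨ b • m ∈ F

/-- `M₁` as a module over `R₁ × R₂` via the first projection. -/
noncomputable instance moduleProdFst {R₁ R₂ M₁ : Type*} [CommRing R₁] [CommRing R₂]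
    [AddCommGroup M₁] [Module R₁ M₁] : Module (R₁ × R₂) M₁ :=
  Module.compHom M₁ (RingHom.fst R₁ R₂)

/-- `M₂` as a module over `R₁ × R₂` via the second projection. -/
noncomputable instance moduleProdSnd {R₁ R₂ M₂ : Type*} [CommRing R₁] [CommRing R₂]
    [AddCommGroup M₂] [Module R₂ M₂] : Module (R₁ × R₂) M₂ :=
  Module.compHom M₂ (RingHom.snd R₁ R₂)

/-- For submodules `F₁ ≤ M₁` (over `R₁`) and `F₂ ≤ M₂` (over `R₂`), the product
`F₁ × F₂` is an `(R₁ × R₂)`-submodule of `M₁ × M₂`. -/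
def prodSub {R₁ R₂ M₁ M₂ : Type*} [CommRing R₁] [CommRing R₂] [AddCommGroup M₁]
    [Module R₁ M₁] [AddCommGroup M₂] [Module R₂ M₂]
    (F₁ : Submodule R₁ M₁) (F₂ : Submodule R₂ M₂) : Submodule (R₁ × R₂) (M₁ × M₂) where
  carrier := {x | x.1 ∈ F₁ ∧ x.2 ∈ F₂}
  add_mem' h h' := ⟨F₁.add_mem h.1 h'.1, F₂.add_mem h.2 h'.2⟩
  zero_mem' := ⟨F₁.zero_mem, F₂.zero_mem⟩
  smul_mem' c x h := ⟨F₁.smul_mem c.1 h.1, F₂.smul_mem c.2 h.2⟩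


/-- Auxiliary: for a prime submodule, from `a • b • m ∈ P` we get two of the three
2-absorbing conclusions. -/
lemma prime_two_of_three {R M : Type*} [CommRing R] [AddCommGroup M] [Module R M]
    {P : Submodule R M} (h : IsPrimeSubmodule P) (a b : R) (m : M)
    (hab : a • b • m ∈ P) :
    (a • m ∈ P ∧ b • m ∈ P) ∨ (a • m ∈ P ∧ a * b ∈ P.colon ⊤) ∨
      (b • m ∈ P ∧ a * b ∈ P.colon ⊤) := by
  have hba : b • a • m ∈ P := by rwa [smul_comm]
  have hcol : ∀ r : R, r ∈ P.colon ⊤ ↔ ∀ x : M, r • x ∈ P := by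
    intro r
    rw [Submodule.mem_colon]
    exact ⟨fun h x => h x trivial, fun h x _ => h x⟩
  have h1 := h.2 a (b • m) hab
  have h2 := h.2 b (a • m) hba
  have habc : ∀ r : R, a ∈ P.colon ⊤ ∨ b ∈ P.colon ⊤ → a * b ∈ P.colon ⊤ := by
    intro _ h'
    rw [hcol]; intro x
    rcases h' with h' | h'
    · rw [mul_smul]; exact (hcol a).mp h' (b • x)
    · rw [mul_comm, mul_smul]; exact (hcol b).mp h' (a • x)
  rcases h1 with h1 | h1 <;> rcases h2 with h2 | h2
  · exact Or.inl ⟨h2, h1⟩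
  · exact Or.inr (Or.inr ⟨h1, habc a (Or.inr h2)⟩)
  · exact Or.inr (Or.inl ⟨h2, habc a (Or.inl h1)⟩)
  · exact Or.inr (Or.inl ⟨(hcol a).mp h1 m, habc a (Or.inl h1)⟩)

/-- If `P₁` is a prime submodule of `M₁` and `P₂` is a prime submodule of `M₂`, then
`P₁ × P₂` is a 2-absorbing submodule of the `(R₁ × R₂)`-module `M₁ × M₂`. -/
theorem prod_primes_isTwoAbsorbing {R₁ R₂ M₁ M₂ : Type*} [CommRing R₁] [CommRing R₂]
    [AddCommGroup M₁] [Module R₁ M₁] [AddCommGroup M₂] [Module R₂ M₂]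
    (P₁ : Submodule R₁ M₁) (P₂ : Submodule R₂ M₂)
    (h₁ : IsPrimeSubmodule P₁) (h₂ : IsPrimeSubmodule P₂) :
    IsTwoAbsorbing (prodSub P₁ P₂) := by
  have hP₁ := h₁.1
  constructor
  · intro htop
    apply hP₁
    ext x
    simp only [Submodule.mem_top, iff_true]
    have : ((x, (0 : M₂)) : M₁ × M₂) ∈ prodSub P₁ P₂ := htop ▸ Submodule.mem_top
    exact this.1
  · rintro ⟨a₁, a₂⟩ ⟨b₁, b₂⟩ ⟨m₁, m₂⟩ ⟨hm1, hm2⟩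
    have k1 := prime_two_of_three h₁ a₁ b₁ m₁ hm1
    have k2 := prime_two_of_three h₂ a₂ b₂ m₂ hm2
    have hcolP : ∀ {r₁ : R₁} {r₂ : R₂}, r₁ ∈ P₁.colon ⊤ → r₂ ∈ P₂.colon ⊤ →
        ((r₁, r₂) : R₁ × R₂) ∈ (prodSub P₁ P₂).colon ⊤ := by
      intro r₁ r₂ hr₁ hr₂
      rw [Submodule.mem_colon]
      intro p _
      exact ⟨Submodule.mem_colon.mp hr₁ p.1 trivial, Submodule.mem_colon.mp hr₂ p.2 trivial⟩
    rcases k1 with ⟨ha1, hb1⟩ | ⟨ha1, hc1⟩ | ⟨hb1, hc1⟩ <;>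
      rcases k2 with ⟨ha2, hb2⟩ | ⟨ha2, hc2⟩ | ⟨hb2, hc2⟩
    · exact Or.inr (Or.inl ⟨ha1, ha2⟩)
    · exact Or.inr (Or.inl ⟨ha1, ha2⟩)
    · exact Or.inr (Or.inr ⟨hb1, hb2⟩)
    · exact Or.inr (Or.inl ⟨ha1, ha2⟩)
    · exact Or.inr (Or.inl ⟨ha1, ha2⟩)
    · exact Or.inl (hcolP hc1 hc2)
    · exact Or.inr (Or.inr ⟨hb1, hb2⟩)
    · exact Or.inl (hcolP hc1 hc2)
    · exact Or.inr (Or.inr ⟨hb1, hb2⟩)
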